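/- Let m ≥ 1 and let sX, sY, t : Fin m → ℕ be positive with Σ_i t i = Σ_i sX i + Σ_i sY i, and let L = 2m + 3mP + Σ_i t i with P = Σ_i t i + Σ_i sX i + Σ_i sY i. Then no feasible no-idle/no-wait schedule of the constructed two-machine open shop instance has makespan equal to L; equivalently, every feasible schedule has makespan at least L + 1. -/
import Mathlib


/-- M1 processing times of the constructed instance: x-jobs (`j < m`) and y-jobs
(`m ≤ j < 2m`) take time 1, the t-job of index `i` takes time `t i + 3P`. -/
def osA (m : ℕ) (t : Fin m → ℕ) (P : ℕ) : Fin (3 * m) → ℕ := fun j =>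
  if _ : (j : ℕ) < 2 * m then 1 else t ⟨(j : ℕ) - 2 * m, by omega⟩ + 3 * P

/-- M2 processing times of the constructed instance: the x-job of index `i` takes
time `sX i + P`, the y-job of index `i` takes `sY i + 2P`, t-jobs take time 2. -/
def osB (m : ℕ) (sX sY : Fin m → ℕ) (P : ℕ) : Fin (3 * m) → ℕ := fun j =>
  if h1 : (j : ℕ) < m then sX ⟨(j : ℕ), h1⟩ + P
  else if _ : (j : ℕ) < 2 * m then sY ⟨(j : ℕ) - m, by omega⟩ + 2 * P
  else 2

/-- Start time of job `j` on a machine with processing times `c`, processing order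
`π` and machine start time `s`: the machine works contiguously (no idle time). -/
def startTime (N : ℕ) (c : Fin N → ℕ) (π : Fin N ≃ Fin N) (s : ℕ) (j : Fin N) : ℕ :=
  s + ∑ l ∈ Finset.univ.filter (fun l : Fin N => l < π.symm j), c (π l)

/-- A no-idle/no-wait two-machine open shop schedule: each machine processes all jobs
contiguously in orders `π1`, `π2` from start times `s1`, `s2`, and for each job either
its M2 operation starts exactly when its M1 operation completes, or vice versa. -/
def OSSchedule (N : ℕ) (a b : Fin N → ℕ)
    (π1 π2 : Fin N ≃ Fin N) (s1 s2 : ℕ) : Prop :=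
  ∀ j : Fin N,
    startTime N b π2 s2 j = startTime N a π1 s1 j + a j ∨
    startTime N a π1 s1 j = startTime N b π2 s2 j + b j

lemma sum_three (m : ℕ) (f : Fin (3 * m) → ℕ) :
    ∑ j, f j = (∑ i : Fin m, f ⟨i, by omega⟩) + (∑ i : Fin m, f ⟨m + i, by omega⟩)
      + (∑ i : Fin m, f ⟨2 * m + i, by omega⟩) := by
  have h3 : m + m + m = 3 * m := by ring
  rw [← Equiv.sum_comp (finCongr h3) f, Fin.sum_univ_add, Fin.sum_univ_add]
  have e1 : (∑ i : Fin m, f ((finCongr h3) (Fin.castAdd m (Fin.castAdd m i))))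
      = ∑ i : Fin m, f ⟨i, by omega⟩ :=
    Finset.sum_congr rfl fun i _ => by congr 1 <;> simp [Fin.ext_iff] <;> omega
  have e2 : (∑ i : Fin m, f ((finCongr h3) (Fin.castAdd m (Fin.natAdd m i))))
      = ∑ i : Fin m, f ⟨m + i, by omega⟩ :=
    Finset.sum_congr rfl fun i _ => by congr 1 <;> simp [Fin.ext_iff] <;> omega
  have e3 : (∑ i : Fin m, f ((finCongr h3) (Fin.natAdd (m + m) i)))
      = ∑ i : Fin m, f ⟨2 * m + i, by omega⟩ :=
    Finset.sum_congr rfl fun i _ => by congr 1 <;> simp [Fin.ext_iff] <;> omega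
  rw [e1, e2, e3]

lemma startTime_first (N : ℕ) (c : Fin N → ℕ) (π : Fin N ≃ Fin N) (s : ℕ)
    (h0 : 0 < N) : startTime N c π s (π ⟨0, h0⟩) = s := by
  unfold startTime
  have : Finset.univ.filter (fun l : Fin N => l < π.symm (π ⟨0, h0⟩)) = ∅ := by
    ext l
    simp [Fin.lt_def]
  rw [this]
  simp

lemma startTime_ge (N : ℕ) (c : Fin N → ℕ) (π : Fin N ≃ Fin N) (s : ℕ)
    (h0 : 0 < N) (j : Fin N) (hj : j ≠ π ⟨0, h0⟩) :
    s + c (π ⟨0, h0⟩) ≤ startTime N c π s j := by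
  unfold startTime
  have hmem : (⟨0, h0⟩ : Fin N) ∈ Finset.univ.filter (fun l : Fin N => l < π.symm j) := by
    simp only [Finset.mem_filter, Finset.mem_univ, true_and, Fin.lt_def]
    have h1 : π.symm j ≠ ⟨0, h0⟩ := by
      intro h
      exact hj (by rw [← h]; simp)
    have h2 : (π.symm j : ℕ) ≠ 0 := fun h => h1 (Fin.ext h)
    omega
  exact Nat.add_le_add_left
    (Finset.single_le_sum (f := fun l => c (π l)) (fun l _ => Nat.zero_le _) hmem) s
/-- no feasible no-idle/no-wait schedule of the constructed two-machine
open shop instance has makespan equal to `L`; equivalently, every feasible schedule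
has makespan at least `L + 1`. -/
theorem stmt_19 (m : ℕ) (hm : 1 ≤ m) (sX sY t : Fin m → ℕ)
    (hsX : ∀ i, 0 < sX i) (hsY : ∀ i, 0 < sY i) (ht : ∀ i, 0 < t i)
    (hsum : ∑ i, t i = ∑ i, sX i + ∑ i, sY i)
    (P L : ℕ) (hP : P = ∑ i, t i + ∑ i, sX i + ∑ i, sY i)
    (hL : L = 2 * m + 3 * m * P + ∑ i, t i) :
    ∀ (π1 π2 : Fin (3 * m) ≃ Fin (3 * m)) (s1 s2 : ℕ),
      OSSchedule (3 * m) (osA m t P) (osB m sX sY P) π1 π2 s1 s2 →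
      max (s1 + ∑ j, osA m t P j) (s2 + ∑ j, osB m sX sY P j) ≠ L ∧
      L + 1 ≤ max (s1 + ∑ j, osA m t P j) (s2 + ∑ j, osB m sX sY P j) := by
  have hne : (Finset.univ : Finset (Fin m)).Nonempty := ⟨⟨0, hm⟩, Finset.mem_univ _⟩
  have hSt : 1 ≤ ∑ i, t i := Finset.sum_pos (fun i _ => ht i) hne
  have hSx : 1 ≤ ∑ i, sX i := Finset.sum_pos (fun i _ => hsX i) hne
  have hSy : 1 ≤ ∑ i, sY i := Finset.sum_pos (fun i _ => hsY i) hne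
  have hP3 : 3 ≤ P := by omega
  -- sums of processing times
  have hA : ∑ j, osA m t P j = L := by
    rw [sum_three]
    have e1 : ∀ i : Fin m, osA m t P ⟨(i : ℕ), by omega⟩ = 1 := by
      intro i
      have hi : (i : ℕ) < 2 * m := by omega
      simp [osA, hi]
    have e2 : ∀ i : Fin m, osA m t P ⟨m + (i : ℕ), by omega⟩ = 1 := by
      intro i
      have hi : m + (i : ℕ) < 2 * m := by have := i.isLt; omega
      simp [osA, hi]
    have e3 : ∀ i : Fin m, osA m t P ⟨2 * m + (i : ℕ), by omega⟩ = t i + 3 * P := by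
      intro i
      have hi : ¬ (2 * m + (i : ℕ) < 2 * m) := by omega
      simp only [osA, hi, dif_neg, not_false_iff]
      congr 2
      ext
      simp
    rw [Finset.sum_congr rfl fun i _ => e1 i, Finset.sum_congr rfl fun i _ => e2 i,
      Finset.sum_congr rfl fun i _ => e3 i, Finset.sum_add_distrib]
    simp only [Finset.sum_const, Finset.card_univ, Fintype.card_fin, smul_eq_mul, mul_one]
    have : m * (3 * P) = 3 * m * P := by ring
    omega
  have hB : ∑ j, osB m sX sY P j = L := by
    rw [sum_three]
    have e1 : ∀ i : Fin m, osB m sX sY P ⟨(i : ℕ), by omega⟩ = sX i + P := by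
      intro i
      have hi : (i : ℕ) < m := i.isLt
      simp [osB, hi]
    have e2 : ∀ i : Fin m, osB m sX sY P ⟨m + (i : ℕ), by omega⟩ = sY i + 2 * P := by
      intro i
      have h1 : ¬ (m + (i : ℕ) < m) := by omega
      have h2 : m + (i : ℕ) < 2 * m := by have := i.isLt; omega
      simp only [osB, h1, dif_neg, not_false_iff, h2, dif_pos]
      congr 2
      ext
      simp
    have e3 : ∀ i : Fin m, osB m sX sY P ⟨2 * m + (i : ℕ), by omega⟩ = 2 := by
      intro i
      have h1 : ¬ (2 * m + (i : ℕ) < m) := by omega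
      have h2 : ¬ (2 * m + (i : ℕ) < 2 * m) := by omega
      simp [osB, h1, h2]
    rw [Finset.sum_congr rfl fun i _ => e1 i, Finset.sum_congr rfl fun i _ => e2 i,
      Finset.sum_congr rfl fun i _ => e3 i, Finset.sum_add_distrib, Finset.sum_add_distrib]
    simp only [Finset.sum_const, Finset.card_univ, Fintype.card_fin, smul_eq_mul]
    have h1 : m * P + m * (2 * P) = 3 * m * P := by ring
    omega
  -- basic bounds on processing times
  have haone : ∀ j : Fin (3 * m), osA m t P j = 1 ∨ 3 * P + 1 ≤ osA m t P j := by
    intro j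
    rw [osA]
    by_cases h : (j : ℕ) < 2 * m
    · left; rw [dif_pos h]
    · right; rw [dif_neg h]; have := ht ⟨(j : ℕ) - 2 * m, by have := j.isLt; omega⟩; omega
  have hapos : ∀ j : Fin (3 * m), 1 ≤ osA m t P j := by
    intro j
    rcases haone j with h | h <;> omega
  have hxle : ∀ i, sX i ≤ ∑ i, sX i := fun i =>
    Finset.single_le_sum (fun i _ => Nat.zero_le _) (Finset.mem_univ i)
  have hyle : ∀ i, sY i ≤ ∑ i, sY i := fun i =>
    Finset.single_le_sum (fun i _ => Nat.zero_le _) (Finset.mem_univ i)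
  have hb : ∀ j : Fin (3 * m), 2 ≤ osB m sX sY P j ∧ osB m sX sY P j < 3 * P := by
    intro j
    rw [osB]
    by_cases h1 : (j : ℕ) < m
    · rw [dif_pos h1]
      have := hxle ⟨(j : ℕ), h1⟩
      omega
    · rw [dif_neg h1]
      by_cases h2 : (j : ℕ) < 2 * m
      · rw [dif_pos h2]
        have := hyle ⟨(j : ℕ) - m, by omega⟩
        omega
      · rw [dif_neg h2]; omega
  -- the key impossibility
  intro π1 π2 s1 s2 hsch
  have h0 : 0 < 3 * m := by omega
  have key : ¬ (s1 = 0 ∧ s2 = 0) := by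
    rintro ⟨rfl, rfl⟩
    have hSv : startTime (3 * m) (osB m sX sY P) π2 0 (π2 ⟨0, h0⟩) = 0 :=
      startTime_first (3 * m) (osB m sX sY P) π2 0 h0
    have hSu : startTime (3 * m) (osA m t P) π1 0 (π1 ⟨0, h0⟩) = 0 :=
      startTime_first (3 * m) (osA m t P) π1 0 h0
    have hv1 : startTime (3 * m) (osA m t P) π1 0 (π2 ⟨0, h0⟩)
        = osB m sX sY P (π2 ⟨0, h0⟩) := by
      rcases hsch (π2 ⟨0, h0⟩) with h | h
      · rw [hSv] at h
        have := hapos (π2 ⟨0, h0⟩)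
        omega
      · rw [hSv] at h
        omega
    have hvu : π2 ⟨0, h0⟩ ≠ π1 ⟨0, h0⟩ := by
      intro h
      rw [h, hSu] at hv1
      rw [h] at *
      have := (hb (π1 ⟨0, h0⟩)).1
      omega
    have hle : osA m t P (π1 ⟨0, h0⟩) ≤ osB m sX sY P (π2 ⟨0, h0⟩) := by
      have := startTime_ge (3 * m) (osA m t P) π1 0 h0 (π2 ⟨0, h0⟩) hvu
      rw [hv1] at this
      omega
    have hau : osA m t P (π1 ⟨0, h0⟩) = 1 := by
      rcases haone (π1 ⟨0, h0⟩) with h | h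
      · exact h
      · have := (hb (π2 ⟨0, h0⟩)).2
        omega
    have hu1 : startTime (3 * m) (osB m sX sY P) π2 0 (π1 ⟨0, h0⟩) = 1 := by
      rcases hsch (π1 ⟨0, h0⟩) with h | h
      · rw [hSu, hau] at h
        omega
      · rw [hSu] at h
        have := (hb (π1 ⟨0, h0⟩)).1
        omega
    have hgev := startTime_ge (3 * m) (osB m sX sY P) π2 0 h0 (π1 ⟨0, h0⟩)
      (fun h => hvu h.symm)
    rw [hu1] at hgev
    have := (hb (π2 ⟨0, h0⟩)).1
    omega
  rw [hA, hB]
  have m1 := le_max_left (s1 + L) (s2 + L)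
  have m2 := le_max_right (s1 + L) (s2 + L)
  have hor : s1 ≠ 0 ∨ s2 ≠ 0 := by tauto
  constructor
  · intro hEq
    apply key
    constructor <;> omega
  · omega
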